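/- arXiv:1406.7309 — 4 statements merged into one kernel-verified Lean document; each statement's English description precedes it below -/
import Mathlib

section
/- The Klein (Cayley-Klein) distance on the open unit disk, defined via d(x,y) = (1/2) log((|a−y||b−x|)/(|a−x||b−y|)) where a, b are the two intersection points of the line xy with the unit circle taken in the order a, x, y, b, satisfies d(x,y) = arccosh((1 − ⟨x,y⟩)/(sqrt(1−|x|²) sqrt(1−|y|²))). -/
open Metric

/-- The inverse hyperbolic cosine. -/
noncomputable def arcosh (x : ℝ) : ℝ := Real.log (x + Real.sqrt (x ^ 2 - 1))

/-!
Parametrize the chord as `r ↦ x + r • (y - x)`, so that `x`, `y`, `a`, `b` sit at the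
parameters `0`, `1`, `s < 0`, `t > 1`. Since `s` and `t` are the roots of the quadratic
`1 - ‖x + r • (y - x)‖²`, the quantities `1 - ⟪x, y⟫`, `1 - ‖x‖²`, `1 - ‖y‖²` are `‖y - x‖²`
times explicit polynomials in `s`, `t`, and the cross ratio `R` is a rational function of
`s`, `t`. The argument `c` of `arcosh` then satisfies `c² = (R + 1)² / (4R) = cosh² (log R / 2)`.
-/

lemma arcosh_cosh {d : ℝ} (hd : 0 ≤ d) : arcosh (Real.cosh d) = d := by
  have hsinh : Real.cosh d ^ 2 - 1 = Real.sinh d ^ 2 := by rw [Real.cosh_sq]; ring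
  rw [arcosh, hsinh, Real.sqrt_sq (Real.sinh_nonneg_iff.mpr hd), Real.cosh_add_sinh, Real.log_exp]

lemma arcosh_eq_half_log {R c : ℝ} (hR : 1 ≤ R) (hc : 0 ≤ c)
    (hcR : c ^ 2 = (R + 1) ^ 2 / (4 * R)) : arcosh c = Real.log R / 2 := by
  have hR0 : 0 < R := by linarith
  have hcosh : Real.cosh (Real.log R / 2) = c := by
    refine (pow_left_inj₀ (Real.cosh_pos _).le hc two_ne_zero).mp ?_
    have hcosh_log := Real.cosh_log hR0
    rw [show Real.log R = 2 * (Real.log R / 2) by ring, Real.cosh_two_mul, Real.cosh_sq'] at hcosh_log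
    rw [hcR, Real.cosh_sq']
    field_simp at hcosh_log ⊢
    linear_combination hcosh_log
  rw [← hcosh, arcosh_cosh (by have := Real.log_nonneg hR; positivity)]

lemma half_log_cross_ratio_eq_arcosh {A s t : ℝ} (hA : 0 < A) (hs : s < 0) (ht : 1 < t) :
    1 / 2 * Real.log ((1 - s) * t / (-s * (t - 1))) =
      arcosh (A * (s + t - 2 * s * t) / 2 /
        (Real.sqrt (A * (-s * t)) * Real.sqrt (A * ((1 - s) * (t - 1))))) := by
  have hs0 : s ≠ 0 := hs.ne
  have ht0 : t ≠ 0 := by linarith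
  have ht1 : t - 1 ≠ 0 := by linarith
  have hs1 : 1 - s ≠ 0 := by linarith
  have hp : 0 < -s * t := by nlinarith
  have hq : 0 < (1 - s) * (t - 1) := by nlinarith
  rw [arcosh_eq_half_log]
  · ring
  · rw [le_div_iff₀ (by nlinarith)]; nlinarith
  · exact div_nonneg (by nlinarith) (by positivity)
  · rw [div_pow, mul_pow, Real.sq_sqrt (by positivity), Real.sq_sqrt (by positivity)]
    field_simp
    ring

section Chord

variable {E : Type*} [NormedAddCommGroup E] [InnerProductSpace ℝ E]

lemma one_sub_inner_add_smul {x u : E} {s t : ℝ} (hst : s ≠ t)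
    (hs : ‖x + s • u‖ = 1) (ht : ‖x + t • u‖ = 1) (r r' : ℝ) :
    1 - inner ℝ (x + r • u) (x + r' • u) =
      -‖u‖ ^ 2 * ((r - s) * (r' - t) + (r - t) * (r' - s)) / 2 := by
  have expand : ∀ r r' : ℝ, inner ℝ (x + r • u) (x + r' • u) =
      ‖x‖ ^ 2 + (r + r') * inner ℝ x u + r * r' * ‖u‖ ^ 2 := by
    intro r r'
    simp only [inner_add_left, inner_add_right, real_inner_smul_left, real_inner_smul_right,
      real_inner_self_eq_norm_sq, real_inner_comm x u]
    ring
  have hs' := expand s s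
  have ht' := expand t t
  rw [real_inner_self_eq_norm_sq, hs] at hs'
  rw [real_inner_self_eq_norm_sq, ht] at ht'
  have hsum : ‖u‖ ^ 2 * (s + t) + 2 * inner ℝ x u = 0 := by
    have h : (t - s) * (‖u‖ ^ 2 * (s + t) + 2 * inner ℝ x u) = 0 := by
      linear_combination hs' - ht'
    exact (mul_eq_zero.mp h).resolve_left (sub_ne_zero.mpr hst.symm)
  rw [expand]
  linear_combination hs' - (r + r' - 2 * s) / 2 * hsum

lemma one_sub_norm_add_smul_sq {x u : E} {s t : ℝ} (hst : s ≠ t)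
    (hs : ‖x + s • u‖ = 1) (ht : ‖x + t • u‖ = 1) (r : ℝ) :
    1 - ‖x + r • u‖ ^ 2 = -‖u‖ ^ 2 * (r - s) * (r - t) := by
  rw [← real_inner_self_eq_norm_sq, one_sub_inner_add_smul hst hs ht]
  ring

lemma norm_cross_ratio_add_smul_sub {x y : E} (hxy : x ≠ y) {s t : ℝ} (hs : s < 0) (ht : 1 < t) :
    ‖x + s • (y - x) - y‖ * ‖x + t • (y - x) - x‖ /
        (‖x + s • (y - x) - x‖ * ‖x + t • (y - x) - y‖) =
      (1 - s) * t / (-s * (t - 1)) := by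
  have hu : 0 < ‖y - x‖ := norm_pos_iff.mpr (sub_ne_zero.mpr hxy.symm)
  have hdist : ∀ r : ℝ, ‖x + r • (y - x) - y‖ = |r - 1| * ‖y - x‖ := fun r => by
    rw [show x + r • (y - x) - y = (r - 1) • (y - x) by module, norm_smul, Real.norm_eq_abs]
  have hdist₀ : ∀ r : ℝ, ‖x + r • (y - x) - x‖ = |r| * ‖y - x‖ := fun r => by
    rw [add_sub_cancel_left, norm_smul, Real.norm_eq_abs]
  rw [hdist, hdist, hdist₀, hdist₀, abs_of_neg (by linarith : s - 1 < 0),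
    abs_of_pos (by linarith : 0 < t - 1), abs_of_neg hs, abs_of_pos (by linarith : 0 < t)]
  field_simp
  ring

end Chord

theorem klein_dist_eq_arcosh_general (x y a b : EuclideanSpace ℝ (Fin 2))
    (hxy : x ≠ y)
    (ha : ‖a‖ = 1) (hb : ‖b‖ = 1)
    (hsa : ∃ s : ℝ, s < 0 ∧ a = x + s • (y - x))
    (htb : ∃ t : ℝ, 1 < t ∧ b = x + t • (y - x)) :
    (1 / 2) * Real.log ((‖a - y‖ * ‖b - x‖) / (‖a - x‖ * ‖b - y‖)) =
      arcosh ((1 - inner ℝ x y) /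
        (Real.sqrt (1 - ‖x‖ ^ 2) * Real.sqrt (1 - ‖y‖ ^ 2))) := by
  obtain ⟨s, hs, rfl⟩ := hsa
  obtain ⟨t, ht, rfl⟩ := htb
  set u := y - x
  have hu : 0 < ‖u‖ := norm_pos_iff.mpr (sub_ne_zero.mpr hxy.symm)
  have hx : x = x + (0 : ℝ) • u := by simp
  have hy : y = x + (1 : ℝ) • u := by simp [u]
  have hst : s ≠ t := by linarith
  have hinner : 1 - inner ℝ x y = ‖u‖ ^ 2 * (s + t - 2 * s * t) / 2 := by
    rw [hx, hy, one_sub_inner_add_smul hst ha hb]; ring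
  have hnx : 1 - ‖x‖ ^ 2 = ‖u‖ ^ 2 * (-s * t) := by
    rw [hx, one_sub_norm_add_smul_sq hst ha hb]; ring
  have hny : 1 - ‖y‖ ^ 2 = ‖u‖ ^ 2 * ((1 - s) * (t - 1)) := by
    rw [hy, one_sub_norm_add_smul_sq hst ha hb]; ring
  rw [norm_cross_ratio_add_smul_sub hxy hs ht, hinner, hnx, hny]
  exact half_log_cross_ratio_eq_arcosh (by positivity) hs ht

/-- The Cayley–Klein distance `(1/2) log ((|a-y||b-x|)/(|a-x||b-y|))`, where `a`, `b`
are the intersection points of the chord through `x`, `y` with the unit circle,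
in the order `a, x, y, b`, equals
`arccosh ((1 - ⟨x,y⟩)/(√(1-|x|²) √(1-|y|²)))`. -/
theorem klein_dist_eq_arcosh (x y a b : EuclideanSpace ℝ (Fin 2))
    (hx : ‖x‖ < 1) (hy : ‖y‖ < 1) (hxy : x ≠ y)
    (ha : ‖a‖ = 1) (hb : ‖b‖ = 1)
    (hsa : ∃ s : ℝ, s < 0 ∧ a = x + s • (y - x))
    (htb : ∃ t : ℝ, 1 < t ∧ b = x + t • (y - x)) :
    (1 / 2) * Real.log ((‖a - y‖ * ‖b - x‖) / (‖a - x‖ * ‖b - y‖)) =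
      arcosh ((1 - inner ℝ x y) /
        (Real.sqrt (1 - ‖x‖ ^ 2) * Real.sqrt (1 - ‖y‖ ^ 2))) :=
  klein_dist_eq_arcosh_general x y a b hxy ha hb hsa htb
end

section
/- Degeneration of Klein's hyperbolic distance to the Euclidean distance: for fixed points x, y ∈ ℝ², the rescaled Cayley-Klein distance on the disk of radius R, namely R · d_R(x, y) where d_R is the Klein metric of the disk {|p| < R} (given by arccosh((R² − ⟨x,y⟩)/(sqrt(R²−|x|²) sqrt(R²−|y|²)))), converges to the Euclidean distance |x − y| as R → ∞. -/
open Filter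

/-- The Cayley–Klein distance of the disk of radius `R`. -/
noncomputable def kleinDistR (R : ℝ) (x y : EuclideanSpace ℝ (Fin 2)) : ℝ :=
  arcosh ((R ^ 2 - (inner ℝ x y : ℝ)) /
    (Real.sqrt (R ^ 2 - ‖x‖ ^ 2) * Real.sqrt (R ^ 2 - ‖y‖ ^ 2)))

/-!
Let `A_R` be the argument of `arcosh` in `kleinDistR R x y`. Clearing denominators,
`R² (A_R² - 1) → ‖x‖² - 2⟪x, y⟫ + ‖y‖² = ‖x - y‖²`, and since `A_R + 1 ≥ 1` also
`R (A_R - 1) → 0`. Hence `arcosh A_R = log (1 + u_R)` with `u_R = (A_R - 1) + √(A_R² - 1)` and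
`R u_R → ‖x - y‖`; the bounds `u / (1 + u) ≤ log (1 + u) ≤ u` give `R log (1 + u_R)` the same
limit.
-/

open Topology

theorem tendsto_mul_log_one_add {α : Type*} {l : Filter α} {f u : α → ℝ} {d : ℝ}
    (hu : Tendsto u l (𝓝 0)) (hfu : Tendsto (fun a => f a * u a) l (𝓝 d))
    (hf : ∀ᶠ a in l, 0 ≤ f a) :
    Tendsto (fun a => f a * Real.log (1 + u a)) l (𝓝 d) := by
  have h1u : Tendsto (fun a => 1 + u a) l (𝓝 1) := by
    simpa using (tendsto_const_nhds (x := (1 : ℝ))).add hu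
  have hpos : ∀ᶠ a in l, 0 < 1 + u a := h1u.eventually_const_lt one_pos
  have hlower : Tendsto (fun a => f a * u a * (1 + u a)⁻¹) l (𝓝 d) := by
    simpa using hfu.mul (h1u.inv₀ one_ne_zero)
  refine tendsto_of_tendsto_of_tendsto_of_le_of_le' hlower hfu ?_ ?_
  · filter_upwards [hf, hpos] with a hfa hua
    calc f a * u a * (1 + u a)⁻¹ = f a * (1 - (1 + u a)⁻¹) := by field_simp; ring
      _ ≤ f a * Real.log (1 + u a) :=
          mul_le_mul_of_nonneg_left (Real.one_sub_inv_le_log_of_pos hua) hfa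
  · filter_upwards [hf, hpos] with a hfa hua
    calc f a * Real.log (1 + u a) ≤ f a * (1 + u a - 1) :=
          mul_le_mul_of_nonneg_left (Real.log_le_sub_one_of_pos hua) hfa
      _ = f a * u a := by ring

/-- `cosh` of the Klein distance in the disk of radius `R` between points of norms `n`, `m`
and inner product `p`. -/
noncomputable def kleinCosh (R n m p : ℝ) : ℝ :=
  (R ^ 2 - p) / (√(R ^ 2 - n ^ 2) * √(R ^ 2 - m ^ 2))

section
variable (n m p : ℝ)

lemma tendsto_sq_mul_kleinCosh_sq_sub_one :
    Tendsto (fun R => R ^ 2 * (kleinCosh R n m p ^ 2 - 1)) atTop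
      (𝓝 (n ^ 2 - 2 * p + m ^ 2)) := by
  set g : ℝ → ℝ := fun w =>
    (n ^ 2 - 2 * p + m ^ 2 + (p ^ 2 - n ^ 2 * m ^ 2) * w) / ((1 - n ^ 2 * w) * (1 - m ^ 2 * w))
  have hg : ContinuousAt g 0 := by fun_prop (disch := norm_num)
  have hw : Tendsto (fun R : ℝ => (R ^ 2)⁻¹) atTop (𝓝 0) :=
    (tendsto_pow_atTop two_ne_zero).inv_tendsto_atTop
  have hlim := hg.tendsto.comp hw
  simp only [g, mul_zero, add_zero, sub_zero, mul_one, div_one] at hlim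
  refine hlim.congr' ?_
  have hsq : Tendsto (fun R : ℝ => R ^ 2) atTop atTop := tendsto_pow_atTop two_ne_zero
  filter_upwards [hsq.eventually_gt_atTop (n ^ 2), hsq.eventually_gt_atTop (m ^ 2)] with R hn hm
  have hn' : 0 < R ^ 2 - n ^ 2 := by linarith
  have hm' : 0 < R ^ 2 - m ^ 2 := by linarith
  have hR : R ≠ 0 := by rintro rfl; nlinarith
  simp only [Function.comp, kleinCosh, div_pow, mul_pow, Real.sq_sqrt hn'.le, Real.sq_sqrt hm'.le]
  field_simp
  ring

lemma eventually_kleinCosh_nonneg : ∀ᶠ R : ℝ in atTop, 0 ≤ kleinCosh R n m p := by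
  filter_upwards [(tendsto_pow_atTop two_ne_zero).eventually_gt_atTop p] with R hR
  exact div_nonneg (sub_nonneg.2 hR.le) (by positivity)

lemma tendsto_mul_kleinCosh_sub_one :
    Tendsto (fun R => R * (kleinCosh R n m p - 1)) atTop (𝓝 0) := by
  have hbound : Tendsto (fun R => |R ^ 2 * (kleinCosh R n m p ^ 2 - 1)| * R⁻¹) atTop (𝓝 0) := by
    simpa using (tendsto_sq_mul_kleinCosh_sq_sub_one n m p).abs.mul tendsto_inv_atTop_zero
  refine squeeze_zero_norm' ?_ hbound
  filter_upwards [eventually_gt_atTop 0, eventually_kleinCosh_nonneg n m p] with R hR hA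
  have hfactor : R ^ 2 * (kleinCosh R n m p ^ 2 - 1) * R⁻¹
      = R * (kleinCosh R n m p - 1) * (kleinCosh R n m p + 1) := by
    field_simp; ring
  rw [Real.norm_eq_abs, ← abs_of_pos (inv_pos.2 hR), ← abs_mul, hfactor,
    abs_mul _ (kleinCosh R n m p + 1)]
  exact le_mul_of_one_le_right (abs_nonneg _) (le_abs.2 (Or.inl (by linarith)))

theorem tendsto_mul_arcosh_kleinCosh :
    Tendsto (fun R => R * arcosh (kleinCosh R n m p)) atTop
      (𝓝 √(n ^ 2 - 2 * p + m ^ 2)) := by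
  set u : ℝ → ℝ := fun R => kleinCosh R n m p - 1 + √(kleinCosh R n m p ^ 2 - 1)
  have hRu : Tendsto (fun R => R * u R) atTop (𝓝 √(n ^ 2 - 2 * p + m ^ 2)) := by
    have := (tendsto_mul_kleinCosh_sub_one n m p).add
      ((tendsto_sq_mul_kleinCosh_sq_sub_one n m p).sqrt)
    rw [zero_add] at this
    refine this.congr' ?_
    filter_upwards [eventually_gt_atTop 0] with R hR
    rw [Real.sqrt_mul (sq_nonneg R), Real.sqrt_sq hR.le]
    ring
  have hu : Tendsto u atTop (𝓝 0) := by
    have := hRu.mul tendsto_inv_atTop_zero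
    rw [mul_zero] at this
    refine this.congr' ?_
    filter_upwards [eventually_gt_atTop 0] with R hR
    field_simp
  refine (tendsto_mul_log_one_add hu hRu (eventually_ge_atTop 0)).congr fun R => ?_
  simp only [arcosh, u]
  ring_nf

end

/-- Degeneration of Klein's hyperbolic geometry to Euclidean geometry: the rescaled
Cayley–Klein distance `R · d_R(x,y)` of the disk of radius `R` converges to the
Euclidean distance `‖x − y‖` as `R → ∞`. -/
theorem klein_degenerates_to_euclidean (x y : EuclideanSpace ℝ (Fin 2)) :
    Tendsto (fun R : ℝ => R * kleinDistR R x y) atTop (nhds ‖x - y‖) := by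
  have := tendsto_mul_arcosh_kleinCosh ‖x‖ ‖y‖ (inner ℝ x y)
  rwa [← norm_sub_sq_real, Real.sqrt_sq (norm_nonneg _)] at this
end

section
/- Through every point of the one-sheeted hyperboloid x² + y² − z² = 1 in ℝ³ there pass exactly two distinct straight lines entirely contained in the surface (the surface is doubly ruled). -/
/-!
A line `p + t u` lies on a level set `{Q = Q p}` of a quadratic form exactly when `u` is
isotropic and `Q`-orthogonal to `p`. For the Minkowski form `Q = x² + y² − z²` of signature
`(2, 1)` and `Q p = 1`, the plane `p^⊥` has signature `(1, 1)`, so its isotropic vectors form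
exactly two lines: these are the two rulings through `p`.
-/

/-- The one-sheeted hyperboloid `x² + y² − z² = 1` in ℝ³. -/
def Hyperboloid : Set (ℝ × ℝ × ℝ) :=
  {p | p.1 ^ 2 + p.2.1 ^ 2 - p.2.2 ^ 2 = 1}

open QuadraticMap

theorem QuadraticMap.forall_map_add_smul_eq_iff {R M N : Type*} [CommRing R] [Invertible (2 : R)]
    [AddCommGroup M] [Module R M] [AddCommGroup N] [Module R N] (Q : QuadraticMap R M N)
    (p u : M) : (∀ t : R, Q (p + t • u) = Q p) ↔ polar Q p u = 0 ∧ Q u = 0 := by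
  have expand (t : R) : Q (p + t • u) = Q p + ((t * t) • Q u + t • polar Q p u) := by
    rw [QuadraticMap.map_add (⇑Q), QuadraticMap.map_smul, polar_smul_right, add_assoc]
  simp only [expand, add_eq_left]
  refine ⟨fun h => ?_, fun ⟨hpolar, hu⟩ t => by simp [hpolar, hu]⟩
  have h₁ := h 1
  have h₂ := h (-1)
  simp only [mul_one, one_smul, neg_mul_neg, neg_smul] at h₁ h₂
  have hu : Q u = 0 := by
    have h2 : (2 : R) • Q u = 0 :=
      calc (2 : R) • Q u = (Q u + polar Q p u) + (Q u + -polar Q p u) := by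
            rw [two_smul]; abel
        _ = 0 := by rw [h₁, h₂, add_zero]
    rw [← invOf_smul_smul (2 : R) (Q u), h2, smul_zero]
  exact ⟨by simpa [hu] using h₁, hu⟩

def minkowskiQuadraticForm : QuadraticForm ℝ (ℝ × ℝ × ℝ) :=
  QuadraticMap.sq.comp (LinearMap.fst ℝ ℝ (ℝ × ℝ))
    + QuadraticMap.sq.comp (LinearMap.fst ℝ ℝ ℝ ∘ₗ LinearMap.snd ℝ ℝ (ℝ × ℝ))
    - QuadraticMap.sq.comp (LinearMap.snd ℝ ℝ ℝ ∘ₗ LinearMap.snd ℝ ℝ (ℝ × ℝ))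

local notation "Q" => minkowskiQuadraticForm

theorem minkowskiQuadraticForm_apply (p : ℝ × ℝ × ℝ) :
    Q p = p.1 ^ 2 + p.2.1 ^ 2 - p.2.2 ^ 2 := by
  simp [minkowskiQuadraticForm, _root_.sq]

theorem polar_minkowskiQuadraticForm (p u : ℝ × ℝ × ℝ) :
    polar Q p u = 2 * (p.1 * u.1 + p.2.1 * u.2.1 - p.2.2 * u.2.2) := by
  simp only [polar, minkowskiQuadraticForm_apply, Prod.fst_add, Prod.snd_add]
  ring

theorem mem_hyperboloid_iff {p : ℝ × ℝ × ℝ} : p ∈ Hyperboloid ↔ Q p = 1 := by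
  rw [minkowskiQuadraticForm_apply]
  rfl

theorem forall_add_smul_mem_hyperboloid_iff {p : ℝ × ℝ × ℝ} (hp : p ∈ Hyperboloid)
    (u : ℝ × ℝ × ℝ) :
    (∀ t : ℝ, p + t • u ∈ Hyperboloid) ↔ polar Q p u = 0 ∧ Q u = 0 := by
  rw [mem_hyperboloid_iff] at hp
  simp only [mem_hyperboloid_iff, ← hp]
  exact forall_map_add_smul_eq_iff Q p u

theorem sq_add_sq_pos_of_minkowskiQuadraticForm_pos {p : ℝ × ℝ × ℝ} (hp : 0 < Q p) :
    0 < p.1 ^ 2 + p.2.1 ^ 2 := by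
  rw [minkowskiQuadraticForm_apply] at hp
  nlinarith [sq_nonneg p.2.2]

/-- For `p = (a, b, c)` with `Q p = 1`, the vectors `c p + e₃ = (a c, b c, a² + b²)` and
`e₃ × p = (-b, a, 0)` are a `Q`-orthogonal basis of `p^⊥` with `Q`-values `-(a² + b²)` and
`a² + b²`, so the isotropic lines of `p^⊥` are spanned by `c p + e₃ ± e₃ × p`. -/
def rulingDirection (s : ℝ) (p : ℝ × ℝ × ℝ) : ℝ × ℝ × ℝ :=
  (p.1 * p.2.2 - s * p.2.1, p.2.1 * p.2.2 + s * p.1, p.1 ^ 2 + p.2.1 ^ 2)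

theorem minkowskiQuadraticForm_rulingDirection (s : ℝ) (p : ℝ × ℝ × ℝ) :
    Q (rulingDirection s p) = (p.1 ^ 2 + p.2.1 ^ 2) * (s ^ 2 - Q p) := by
  simp only [minkowskiQuadraticForm_apply, rulingDirection]
  ring

theorem polar_minkowskiQuadraticForm_rulingDirection (s : ℝ) (p : ℝ × ℝ × ℝ) :
    polar Q p (rulingDirection s p) = 0 := by
  simp only [polar_minkowskiQuadraticForm, rulingDirection]
  ring

theorem rulingDirection_ne_zero (s : ℝ) {p : ℝ × ℝ × ℝ} (hp : p.1 ^ 2 + p.2.1 ^ 2 ≠ 0) :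
    rulingDirection s p ≠ 0 :=
  fun h => hp (congrArg (fun v => v.2.2) h)

theorem not_exists_rulingDirection_eq_smul {s t : ℝ} (hst : s ≠ t) {p : ℝ × ℝ × ℝ}
    (hp : p.1 ^ 2 + p.2.1 ^ 2 ≠ 0) :
    ¬∃ k : ℝ, rulingDirection t p = k • rulingDirection s p := by
  rintro ⟨k, hk⟩
  simp only [rulingDirection, Prod.smul_mk, Prod.mk.injEq, smul_eq_mul] at hk
  obtain ⟨h₁, h₂, h₃⟩ := hk
  obtain rfl : k = 1 := mul_right_cancel₀ hp (h₃.symm.trans (one_mul _).symm)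
  have hst' : s - t ≠ 0 := sub_ne_zero.mpr hst
  have ha : p.1 = 0 :=
    (mul_eq_zero.mp (by linear_combination -h₂ : (s - t) * p.1 = 0)).resolve_left hst'
  have hb : p.2.1 = 0 :=
    (mul_eq_zero.mp (by linear_combination h₁ : (s - t) * p.2.1 = 0)).resolve_left hst'
  exact hp (by rw [ha, hb]; ring)

theorem eq_smul_rulingDirection {s : ℝ} {p u : ℝ × ℝ × ℝ} (hp : p.1 ^ 2 + p.2.1 ^ 2 ≠ 0)
    (hpu : polar Q p u = 0) (hs : p.2.1 * u.1 - p.1 * u.2.1 = -s * u.2.2) :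
    u = (u.2.2 / (p.1 ^ 2 + p.2.1 ^ 2)) • rulingDirection s p := by
  rw [polar_minkowskiQuadraticForm, mul_eq_zero, or_iff_right two_ne_zero] at hpu
  obtain ⟨u₁, u₂, u₃⟩ := u
  simp only [rulingDirection, Prod.smul_mk, Prod.mk.injEq, smul_eq_mul] at hpu hs ⊢
  refine ⟨?_, ?_, ?_⟩ <;> field_simp
  · linear_combination p.1 * hpu + p.2.1 * hs
  · linear_combination p.2.1 * hpu - p.1 * hs

theorem exists_eq_smul_rulingDirection {p u : ℝ × ℝ × ℝ} (hp : Q p = 1)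
    (hpu : polar Q p u = 0) (hu : Q u = 0) :
    (∃ k : ℝ, u = k • rulingDirection 1 p) ∨
      (∃ k : ℝ, u = k • rulingDirection (-1) p) := by
  have hN := (sq_add_sq_pos_of_minkowskiQuadraticForm_pos (hp ▸ one_pos)).ne'
  have horth : p.1 * u.1 + p.2.1 * u.2.1 - p.2.2 * u.2.2 = 0 := by
    rw [polar_minkowskiQuadraticForm] at hpu
    linarith
  rw [minkowskiQuadraticForm_apply] at hp hu
  have hfactor :
      (p.2.1 * u.1 - p.1 * u.2.1 + u.2.2) * (p.2.1 * u.1 - p.1 * u.2.1 - u.2.2) = 0 := by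
    linear_combination (p.1 ^ 2 + p.2.1 ^ 2) * hu + u.2.2 ^ 2 * hp -
      (p.1 * u.1 + p.2.1 * u.2.1 + p.2.2 * u.2.2) * horth
  rcases mul_eq_zero.mp hfactor with h | h
  · exact Or.inl ⟨_, eq_smul_rulingDirection hN hpu (by linear_combination h)⟩
  · exact Or.inr ⟨_, eq_smul_rulingDirection hN hpu (by linear_combination h)⟩

/-- The one-sheeted hyperboloid is doubly ruled: through each of its points pass exactly
two straight lines entirely contained in the surface (two non-proportional directions
`v`, `w`, and every direction of a line through the point contained in the surface is
proportional to `v` or to `w`). -/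
theorem hyperboloid_doubly_ruled (p : ℝ × ℝ × ℝ) (hp : p ∈ Hyperboloid) :
    ∃ v w : ℝ × ℝ × ℝ, v ≠ 0 ∧ w ≠ 0 ∧ (¬∃ c : ℝ, w = c • v) ∧
      (∀ t : ℝ, p + t • v ∈ Hyperboloid) ∧
      (∀ t : ℝ, p + t • w ∈ Hyperboloid) ∧
      ∀ u : ℝ × ℝ × ℝ, u ≠ 0 → (∀ t : ℝ, p + t • u ∈ Hyperboloid) →
        (∃ c : ℝ, u = c • v) ∨ (∃ c : ℝ, u = c • w) := by
  have hQp := mem_hyperboloid_iff.mp hp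
  have hN := (sq_add_sq_pos_of_minkowskiQuadraticForm_pos (hQp ▸ one_pos)).ne'
  have ruling_mem {s : ℝ} (hs : s ^ 2 = 1) :
      ∀ t : ℝ, p + t • rulingDirection s p ∈ Hyperboloid :=
    (forall_add_smul_mem_hyperboloid_iff hp _).mpr
      ⟨polar_minkowskiQuadraticForm_rulingDirection s p,
        by rw [minkowskiQuadraticForm_rulingDirection, hs, hQp, sub_self, mul_zero]⟩
  refine ⟨rulingDirection 1 p, rulingDirection (-1) p, rulingDirection_ne_zero 1 hN,
    rulingDirection_ne_zero (-1) hN, not_exists_rulingDirection_eq_smul (by norm_num) hN,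
    ruling_mem (by norm_num), ruling_mem (by norm_num), fun u _ hu => ?_⟩
  obtain ⟨hpu, hQu⟩ := (forall_add_smul_mem_hyperboloid_iff hp u).mp hu
  exact exists_eq_smul_rulingDirection hQp hpu hQu
end

section
/- Hilbert metric triangle inequality: for a bounded open convex set K ⊂ ℝⁿ, the Hilbert distance d_K(x,y) = (1/2) log((|a−y||b−x|)/(|a−x||b−y|)) (where a, b are the boundary intersections of the line through x and y, in the order a, x, y, b), extended by d_K(x,x)=0, satisfies the triangle inequality d_K(x,z) ≤ d_K(x,y) + d_K(y,z) for all x, y, z ∈ K. -/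
/-!
Writing the boundary points as `b = x + t • (y - x)` and `a = y + t' • (x - y)` with `t, t' > 1`,
the cross ratio factors as `(t / (t - 1)) * (t' / (t' - 1))`, so `2 d` is the sum of the Funk
gauges `log (t / (t - 1)) = log (|b - x| / |b - y|)` in the two directions. The Funk gauge
satisfies the triangle inequality: if `g` is the slack of a hyperplane supporting `K` at the exit
point of the ray from `x` through `z`, then `g` is affine, positive on `K`, and `g x / g z` is
the Funk ratio of `(x, z)`, while `g x / g y` and `g y / g z` are at most those of `(x, y)` and
`(y, z)`. Adding the inequalities for `(x, y, z)` and `(z, y, x)` gives the theorem.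
-/

open Set

section

variable {E : Type*} [NormedAddCommGroup E] [NormedSpace ℝ E]

theorem Bornology.IsBounded.exists_pos_add_smul_mem_frontier {K : Set E}
    (hKb : Bornology.IsBounded K) (hKo : IsOpen K) {y v : E} (hy : y ∈ K) (hv : v ≠ 0) :
    ∃ t : ℝ, 0 < t ∧ y + t • v ∈ frontier K := by
  set g : ℝ → E := fun t ↦ y + t • v
  have hg : Continuous g := by fun_prop
  have hgK : AntilipschitzWith ‖v‖₊⁻¹ g := by
    refine AntilipschitzWith.of_le_mul_dist fun s t ↦ ?_
    simp only [g, dist_eq_norm, add_sub_add_left_eq_sub, ← sub_smul, norm_smul, Real.norm_eq_abs]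
    rw [NNReal.coe_inv, coe_nnnorm, mul_left_comm, inv_mul_cancel₀ (norm_ne_zero_iff.2 hv), mul_one]
  set S := g ⁻¹' K
  have hS : IsOpen S := hKo.preimage hg
  have h0S : (0 : ℝ) ∈ S := by simpa [S, g] using hy
  have hSb : BddAbove S := (hgK.isBounded_preimage hKb).bddAbove
  have hsup : sSup S ∉ S := fun h ↦ by
    obtain ⟨u, hu, huS⟩ := Filter.Eventually.exists_gt (hS.mem_nhds h)
    exact (le_csSup hSb huS).not_gt hu
  have hfront : sSup S ∈ frontier S := by
    rw [hS.frontier_eq]; exact ⟨csSup_mem_closure ⟨0, h0S⟩ hSb, hsup⟩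
  refine ⟨sSup S, ?_, hg.frontier_preimage_subset K hfront⟩
  exact (le_csSup hSb h0S).lt_of_ne fun h ↦ hsup (h ▸ h0S)

theorem exists_one_lt_add_smul_sub_mem_frontier {K : Set E} (hKb : Bornology.IsBounded K)
    (hKo : IsOpen K) {x y : E} (hy : y ∈ K) (hxy : x ≠ y) :
    ∃ t : ℝ, 1 < t ∧ x + t • (y - x) ∈ frontier K := by
  obtain ⟨t, ht, hb⟩ := hKb.exists_pos_add_smul_mem_frontier hKo hy (sub_ne_zero.2 hxy.symm)
  refine ⟨1 + t, by linarith, ?_⟩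
  convert hb using 1
  module

lemma div_le_div_sub_one_of_nonneg {p q t : ℝ} (hq : 0 < q) (ht : 1 < t)
    (h : 0 ≤ p + t * (q - p)) :
    p / q ≤ t / (t - 1) := by
  rw [div_le_div_iff₀ hq (by linarith)]
  nlinarith

lemma div_eq_div_sub_one_of_eq_zero {p q t : ℝ} (hq : q ≠ 0) (ht : 1 < t)
    (h : p + t * (q - p) = 0) :
    p / q = t / (t - 1) := by
  rw [div_eq_div_iff hq (by linarith)]
  linarith

lemma one_lt_div_sub_one {t : ℝ} (ht : 1 < t) : 1 < t / (t - 1) := by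
  rw [one_lt_div (by linarith)]
  linarith

lemma dist_add_smul_sub_left (x y : E) (t : ℝ) : dist (x + t • (y - x)) x = |t| * dist x y := by
  rw [add_comm, ← AffineMap.lineMap_apply_module', dist_lineMap_left, Real.norm_eq_abs]

lemma dist_add_smul_sub_right (x y : E) (t : ℝ) :
    dist (x + t • (y - x)) y = |t - 1| * dist x y := by
  rw [add_comm, ← AffineMap.lineMap_apply_module', dist_lineMap_right, Real.norm_eq_abs,
    abs_sub_comm]

theorem funk_triangle {K : Set E} (hKo : IsOpen K) (hKc : Convex ℝ K) {x y z : E}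
    (hy : y ∈ K) (hz : z ∈ K) {t₀ t₁ t₂ : ℝ} (ht₀ : 1 < t₀) (ht₁ : 1 < t₁)
    (ht₂ : 1 < t₂) (hb₀ : x + t₀ • (z - x) ∈ frontier K) (hb₁ : x + t₁ • (y - x) ∈ closure K)
    (hb₂ : y + t₂ • (z - y) ∈ closure K) :
    Real.log (t₀ / (t₀ - 1)) ≤ Real.log (t₁ / (t₁ - 1)) + Real.log (t₂ / (t₂ - 1)) := by
  rw [hKo.frontier_eq] at hb₀
  obtain ⟨f, hf⟩ := geometric_hahn_banach_open_point hKc hKo hb₀.2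
  set g : E → ℝ := fun w ↦ f (x + t₀ • (z - x)) - f w
  have hg_pos : ∀ w ∈ K, 0 < g w := fun w hw ↦ sub_pos.2 (hf w hw)
  have hg_nonneg : ∀ w ∈ closure K, 0 ≤ g w := fun w hw ↦
    closure_minimal (fun w hw ↦ (hg_pos w hw).le)
      (isClosed_le continuous_const (continuous_const.sub f.continuous)) hw
  have hg_line : ∀ (p q : E) (t : ℝ), g (p + t • (q - p)) = g p + t * (g q - g p) := by
    intro p q t
    simp only [g, map_add, map_smul, map_sub, smul_eq_mul]
    ring
  have hxz : g x / g z = t₀ / (t₀ - 1) :=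
    div_eq_div_sub_one_of_eq_zero (hg_pos z hz).ne' ht₀ (by rw [← hg_line]; exact sub_self _)
  have hxy : g x / g y ≤ t₁ / (t₁ - 1) :=
    div_le_div_sub_one_of_nonneg (hg_pos y hy) ht₁ (hg_line x y t₁ ▸ hg_nonneg _ hb₁)
  have hyz : g y / g z ≤ t₂ / (t₂ - 1) :=
    div_le_div_sub_one_of_nonneg (hg_pos z hz) ht₂ (hg_line y z t₂ ▸ hg_nonneg _ hb₂)
  have hpos {t : ℝ} (ht : 1 < t) : 0 < t / (t - 1) := zero_lt_one.trans (one_lt_div_sub_one ht)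
  rw [← Real.log_mul (hpos ht₁).ne' (hpos ht₂).ne']
  refine Real.log_le_log (hpos ht₀) ?_
  calc t₀ / (t₀ - 1) = g x / g y * (g y / g z) := by
        rw [← hxz, div_mul_div_cancel₀ (hg_pos y hy).ne']
    _ ≤ t₁ / (t₁ - 1) * (t₂ / (t₂ - 1)) :=
        mul_le_mul hxy hyz (div_nonneg (hg_pos y hy).le (hg_pos z hz).le)
          (div_nonneg (by linarith) (by linarith))

theorem exists_hilbert_eq_half_log_add_log {K : Set E} (hKb : Bornology.IsBounded K)
    (hKo : IsOpen K) {d : E → E → ℝ}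
    (hd : ∀ x ∈ K, ∀ y ∈ K, x ≠ y →
      ∀ a ∈ frontier K, ∀ b ∈ frontier K,
        (∃ s : ℝ, s < 0 ∧ a = x + s • (y - x)) →
        (∃ t : ℝ, 1 < t ∧ b = x + t • (y - x)) →
        d x y = (1 / 2) * Real.log ((dist a y * dist b x) / (dist a x * dist b y)))
    {x y : E} (hx : x ∈ K) (hy : y ∈ K) (hxy : x ≠ y) :
    ∃ t t' : ℝ, 1 < t ∧ 1 < t' ∧ x + t • (y - x) ∈ frontier K ∧ y + t' • (x - y) ∈ frontier K ∧
      d x y = (Real.log (t / (t - 1)) + Real.log (t' / (t' - 1))) / 2 := by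
  obtain ⟨t, ht, hb⟩ := exists_one_lt_add_smul_sub_mem_frontier hKb hKo hy hxy
  obtain ⟨t', ht', ha⟩ := exists_one_lt_add_smul_sub_mem_frontier hKb hKo hx hxy.symm
  refine ⟨t, t', ht, ht', hb, ha, ?_⟩
  have hdist : 0 < dist x y := dist_pos.2 hxy
  rw [hd x hx y hy hxy _ ha _ hb ⟨1 - t', by linarith, by module⟩ ⟨t, ht, rfl⟩,
    dist_add_smul_sub_left, dist_add_smul_sub_right, dist_add_smul_sub_left,
    dist_add_smul_sub_right, dist_comm y x, abs_of_pos (by linarith : 0 < t),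
    abs_of_pos (by linarith : 0 < t'), abs_of_pos (by linarith : 0 < t - 1),
    abs_of_pos (by linarith : 0 < t' - 1), ← Real.log_mul (by positivity) (by positivity)]
  field_simp

end

/-- Triangle inequality for the Hilbert metric of a bounded open convex set
`K ⊆ ℝⁿ`: if `d` vanishes on the diagonal and, for all distinct `x, y ∈ K`,
`d x y = (1/2) log((|a−y||b−x|)/(|a−x||b−y|))` whenever `a, b` are the two boundary
points of `K` on the line through `x` and `y`, with `a` on the `x`-side and `b` on the
`y`-side (so the order along the line is `a, x, y, b`), then
`d x z ≤ d x y + d y z` for all `x, y, z ∈ K`. -/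
theorem hilbert_metric_triangle (n : ℕ) (K : Set (EuclideanSpace ℝ (Fin n)))
    (hKb : Bornology.IsBounded K) (hKo : IsOpen K) (hKc : Convex ℝ K)
    (d : EuclideanSpace ℝ (Fin n) → EuclideanSpace ℝ (Fin n) → ℝ)
    (hdiag : ∀ x, d x x = 0)
    (hd : ∀ x ∈ K, ∀ y ∈ K, x ≠ y →
      ∀ a ∈ frontier K, ∀ b ∈ frontier K,
        (∃ s : ℝ, s < 0 ∧ a = x + s • (y - x)) →
        (∃ t : ℝ, 1 < t ∧ b = x + t • (y - x)) →
        d x y = (1 / 2) * Real.log ((dist a y * dist b x) / (dist a x * dist b y))) :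
    ∀ x ∈ K, ∀ y ∈ K, ∀ z ∈ K, d x z ≤ d x y + d y z := by
  intro x hx y hy z hz
  rcases eq_or_ne x y with rfl | hxy
  · rw [hdiag, zero_add]
  rcases eq_or_ne y z with rfl | hyz
  · rw [hdiag, add_zero]
  have hlog {t : ℝ} (ht : 1 < t) : 0 ≤ Real.log (t / (t - 1)) :=
    Real.log_nonneg (one_lt_div_sub_one ht).le
  have hilbert {u v : EuclideanSpace ℝ (Fin n)} (hu : u ∈ K) (hv : v ∈ K) (huv : u ≠ v) :=
    exists_hilbert_eq_half_log_add_log hKb hKo hd hu hv huv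
  obtain ⟨t₁, t₁', ht₁, ht₁', hb₁, ha₁, hd₁⟩ := hilbert hx hy hxy
  obtain ⟨t₂, t₂', ht₂, ht₂', hb₂, ha₂, hd₂⟩ := hilbert hy hz hyz
  rcases eq_or_ne x z with rfl | hxz
  · linarith [hdiag x, hlog ht₁, hlog ht₁', hlog ht₂, hlog ht₂']
  obtain ⟨t₀, t₀', ht₀, ht₀', hb₀, ha₀, hd₀⟩ := hilbert hx hz hxz
  have hforward := funk_triangle hKo hKc hy hz ht₀ ht₁ ht₂ hb₀
    (frontier_subset_closure hb₁) (frontier_subset_closure hb₂)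
  have hbackward := funk_triangle hKo hKc hy hx ht₀' ht₂' ht₁' ha₀
    (frontier_subset_closure ha₂) (frontier_subset_closure ha₁)
  linarith
end
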